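/- Let H be a Hopf algebra with bijective antipode, and let X and Y be left–left Yetter–Drinfeld H-module algebras that are braided symmetric, i.e., (y_{(-1)}▷x)⊗y_{(0)} = x_{(0)}⊗(S^{-1}(x_{(-1)})▷y) for all x ∈ X, y ∈ Y, and suppose each of X and Y is braided commutative. Then their braided product X⋈Y is braided commutative: ((x⋈y)_{(-1)}▷(v⋈u))(x⋈y)_{(0)} = (x⋈y)(v⋈u) for all x,v ∈ X and y,u ∈ Y. -/

import Mathlib

open TensorProduct LinearMap

noncomputable section

section AbstractLayer

universe u v w

variable (K : Type u) [Field K]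

/-- Data of an "algebra–coalgebra object" (e.g. a bialgebra such as a Drinfeld double),
recorded as plain linear-map data. -/
structure GData (A : Type v) [AddCommGroup A] [Module K A] where
  mul : A →ₗ[K] A →ₗ[K] A
  one : A
  comul : A →ₗ[K] A ⊗[K] A
  counit : A →ₗ[K] K

/-- Data of an algebra `X` together with an action and a coaction of `A`:
the raw data underlying a (left–left) Yetter–Drinfeld module algebra. -/
structure XData (A : Type v) (X : Type w) [AddCommGroup A] [Module K A]
    [AddCommGroup X] [Module K X] where
  mul : X →ₗ[K] X →ₗ[K] X
  one : X
  act : A →ₗ[K] X →ₗ[K] X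
  coact : X →ₗ[K] A ⊗[K] X

variable {K}
variable {A : Type v} [AddCommGroup A] [Module K A]
variable {X : Type w} [AddCommGroup X] [Module K X]
variable {Y : Type*} [AddCommGroup Y] [Module K Y]

/-- The multiplication as a map on the tensor square. -/
def XData.mulU (M : XData K A X) : X ⊗[K] X →ₗ[K] X := TensorProduct.lift M.mul

/-- The action as a map on the tensor product. -/
def XData.actU (M : XData K A X) : A ⊗[K] X →ₗ[K] X := TensorProduct.lift M.act

/-- The braiding `c_{Y,X} : y ⊗ x ↦ (y₍₋₁₎ ▷ x) ⊗ y₍₀₎` of Yetter–Drinfeld modules. -/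
def braidMap (coactY : Y →ₗ[K] A ⊗[K] Y) (actX : A →ₗ[K] X →ₗ[K] X) :
    Y ⊗[K] X →ₗ[K] X ⊗[K] Y :=
  (rTensor Y (TensorProduct.lift actX)) ∘ₗ
  (TensorProduct.assoc K A X Y).symm.toLinearMap ∘ₗ
  (lTensor A (TensorProduct.comm K Y X).toLinearMap) ∘ₗ
  (TensorProduct.assoc K A Y X).toLinearMap ∘ₗ
  (rTensor X coactY)

/-- The inverse braiding `c⁻¹_{X,Y} : y ⊗ x ↦ x₍₀₎ ⊗ (S⁻¹(x₍₋₁₎) ▷ y)`. -/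
def braidInvMap (coactX : X →ₗ[K] A ⊗[K] X) (actY : A →ₗ[K] Y →ₗ[K] Y)
    (Sinv : A →ₗ[K] A) : Y ⊗[K] X →ₗ[K] X ⊗[K] Y :=
  (lTensor X (TensorProduct.lift actY)) ∘ₗ
  (TensorProduct.assoc K X A Y).toLinearMap ∘ₗ
  (rTensor Y (TensorProduct.comm K A X).toLinearMap) ∘ₗ
  (rTensor Y (rTensor X Sinv)) ∘ₗ
  (rTensor Y coactX) ∘ₗ
  (TensorProduct.comm K Y X).toLinearMap

/-- `x ⊗ y ↦ Σ (h₁ ▷ x) ⊗ (h₂ ▷ y)` for `h₁ ⊗ h₂` ranging over a tensor of the acting object. -/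
def XData.actT (M : XData K A X) :
    (A ⊗[K] A) →ₗ[K] (X ⊗[K] X) →ₗ[K] (X ⊗[K] X) :=
  TensorProduct.lift (((TensorProduct.mapBilinear (RingHom.id K) X X X X).comp M.act).compl₂ M.act)

/-- The multiplication of the tensor-product algebra `A ⊗ X`. -/
def mulAX (G : GData K A) (M : XData K A X) :
    (A ⊗[K] X) ⊗[K] (A ⊗[K] X) →ₗ[K] A ⊗[K] X :=
  (TensorProduct.map (TensorProduct.lift G.mul) M.mulU) ∘ₗ
    (TensorProduct.tensorTensorTensorComm K A X A X).toLinearMap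

/-- Left side of the Yetter–Drinfeld condition: `h ⊗ x ↦ Σ (h₁ ▷ x)₍₋₁₎ h₂ ⊗ (h₁ ▷ x)₍₀₎`. -/
def ydL (G : GData K A) (M : XData K A X) : A ⊗[K] X →ₗ[K] A ⊗[K] X :=
  (rTensor X (TensorProduct.lift G.mul)) ∘ₗ
  (TensorProduct.assoc K A A X).symm.toLinearMap ∘ₗ
  (lTensor A (TensorProduct.comm K X A).toLinearMap) ∘ₗ
  (TensorProduct.assoc K A X A).toLinearMap ∘ₗ
  (rTensor A (M.coact ∘ₗ M.actU)) ∘ₗ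
  (TensorProduct.assoc K A X A).symm.toLinearMap ∘ₗ
  (lTensor A (TensorProduct.comm K A X).toLinearMap) ∘ₗ
  (TensorProduct.assoc K A A X).toLinearMap ∘ₗ
  (rTensor X G.comul)

/-- Right side of the Yetter–Drinfeld condition: `h ⊗ x ↦ Σ h₁ x₍₋₁₎ ⊗ (h₂ ▷ x₍₀₎)`. -/
def ydR (G : GData K A) (M : XData K A X) : A ⊗[K] X →ₗ[K] A ⊗[K] X :=
  (TensorProduct.map (TensorProduct.lift G.mul) M.actU) ∘ₗ
  (TensorProduct.tensorTensorTensorComm K A A A X).toLinearMap ∘ₗ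
  (TensorProduct.map G.comul M.coact)

/-- `X` (with the data `M`) is a left–left Yetter–Drinfeld module algebra over `A`
(with the bialgebra data `G`). -/
structure IsYDMA (G : GData K A) (M : XData K A X) : Prop where
  mul_assoc : ∀ x y z : X, M.mul (M.mul x y) z = M.mul x (M.mul y z)
  one_mul : ∀ x : X, M.mul M.one x = x
  mul_one : ∀ x : X, M.mul x M.one = x
  act_one : M.act G.one = LinearMap.id
  act_mul : ∀ h g : A, M.act (G.mul h g) = (M.act h) ∘ₗ (M.act g)
  act_mul_distrib : ∀ h : A, (M.act h) ∘ₗ M.mulU = M.mulU ∘ₗ (M.actT (G.comul h))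
  act_unit : ∀ h : A, M.act h M.one = G.counit h • M.one
  coassoc : (TensorProduct.assoc K A A X).toLinearMap ∘ₗ (rTensor X G.comul) ∘ₗ M.coact
      = (lTensor A M.coact) ∘ₗ M.coact
  counit_coact : ∀ x : X, (TensorProduct.lid K X) ((rTensor X G.counit) (M.coact x)) = x
  coact_mul : M.coact ∘ₗ M.mulU = (mulAX G M) ∘ₗ (TensorProduct.map M.coact M.coact)
  coact_one : M.coact M.one = G.one ⊗ₜ[K] M.one
  yd : ydL G M = ydR G M

/-- Braided commutativity: `y x = (y₍₋₁₎ ▷ x) y₍₀₎`. -/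
def XData.IsBraidedComm (M : XData K A X) : Prop :=
  ∀ x y : X, M.mul y x = M.mulU (braidMap M.coact M.act (y ⊗ₜ[K] x))

/-- Two Yetter–Drinfeld modules are braided symmetric:
`(y₍₋₁₎ ▷ x) ⊗ y₍₀₎ = x₍₀₎ ⊗ (S⁻¹(x₍₋₁₎) ▷ y)` for all `x, y`. -/
def BraidedSymm (MX : XData K A X) (MY : XData K A Y) (Sinv : A →ₗ[K] A) : Prop :=
  ∀ (y : Y) (x : X),
    braidMap MY.coact MX.act (y ⊗ₜ[K] x)
      = braidInvMap MX.coact MY.act Sinv (y ⊗ₜ[K] x)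

/-- The braided product `X ⋈ Y` of two Yetter–Drinfeld module algebras:
`(x ⋈ y)(v ⋈ u) = x (y₍₋₁₎ ▷ v) ⋈ y₍₀₎ u`, with the diagonal action and
codiagonal coaction. -/
def bp (G : GData K A) (MX : XData K A X) (MY : XData K A Y) :
    XData K A (X ⊗[K] Y) where
  mul := TensorProduct.lift
    (((LinearMap.llcomp K (X ⊗[K] Y) (X ⊗[K] Y) (X ⊗[K] Y)).comp
        ((LinearMap.rTensorHom Y).comp MX.mul)).compl₂
      ((TensorProduct.lift
          (((TensorProduct.mapBilinear (RingHom.id K) X Y X Y).comp MX.act).compl₂ MY.mul)).comp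
        MY.coact))
  one := MX.one ⊗ₜ[K] MY.one
  act := (TensorProduct.lift
      (((TensorProduct.mapBilinear (RingHom.id K) X Y X Y).comp MX.act).compl₂ MY.act)).comp
      G.comul
  coact := (rTensor (X ⊗[K] Y) (TensorProduct.lift G.mul)) ∘ₗ
    (TensorProduct.tensorTensorTensorComm K A X A Y).toLinearMap ∘ₗ
    (TensorProduct.map MX.coact MY.coact)

/-- The bialgebra data of a Hopf algebra. -/
def GData.ofHopf (K H : Type*) [Field K] [Ring H] [HopfAlgebra K H] : GData K H :=
  ⟨LinearMap.mul K H, 1, Coalgebra.comul, Coalgebra.counit⟩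

end AbstractLayer


variable {K : Type u} [Field K]
variable {H : Type v} [Ring H] [HopfAlgebra K H]
variable {X : Type w} [AddCommGroup X] [Module K X]
variable {Y : Type*} [AddCommGroup Y] [Module K Y]

/-! Write `x₍₋₁₎ ⊗ x₍₀₎` for the coaction. By the codiagonal coaction and multiplicativity
of the diagonal action, the left side is `Σ (x₍₋₁₎ ▷ (y₍₋₁₎ ▷ (v ⋈ u))) (x₍₀₎ ⋈ y₍₀₎)`.
Braided symmetry moves `x₍₀₎` past the `Y`-factor at the cost of `S⁻¹(x₍₀₎₍₋₁₎)`, which cancels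
against `x₍₋₁₎` by coassociativity; braided commutativity of `X` then gives
`Σ (x₍₋₁₎ ▷ w)(x₍₀₎ ⋈ y') = (x ⋈ 1) w (1 ⋈ y')` for every `w`. Dually, braided commutativity of
`Y` and coassociativity give `(x ⋈ y)(v ⋈ u) = Σ (x ⋈ 1)(y₍₋₁₎ ▷ (v ⋈ u))(1 ⋈ y₍₀₎)`.
Here `(x ⋈ 1) w (1 ⋈ y')` is `map (MX.mul x) (MY.mul.flip y') w`. -/

open scoped Coalgebra

section General

variable {A : Type*} [AddCommGroup A] [Module K A]

theorem braidMap_tmul_eq_sum (coactY : Y →ₗ[K] A ⊗[K] Y) (actX : A →ₗ[K] X →ₗ[K] X)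
    {y : Y} (x : X) {S : Finset (A × Y)} (hy : coactY y = ∑ r ∈ S, r.1 ⊗ₜ[K] r.2) :
    braidMap coactY actX (y ⊗ₜ[K] x) = ∑ r ∈ S, actX r.1 x ⊗ₜ[K] r.2 := by
  simp [braidMap, hy, TensorProduct.sum_tmul]

theorem braidInvMap_tmul_eq_sum (coactX : X →ₗ[K] A ⊗[K] X) (actY : A →ₗ[K] Y →ₗ[K] Y)
    (Sinv : A →ₗ[K] A) (y : Y) {x : X} {S : Finset (A × X)}
    (hx : coactX x = ∑ r ∈ S, r.1 ⊗ₜ[K] r.2) :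
    braidInvMap coactX actY Sinv (y ⊗ₜ[K] x) = ∑ r ∈ S, r.2 ⊗ₜ[K] actY (Sinv r.1) y := by
  simp [braidInvMap, hx, TensorProduct.sum_tmul]

theorem XData.IsBraidedComm.mul_eq_sum {M : XData K A X} (hM : M.IsBraidedComm) (x : X)
    {y : X} {S : Finset (A × X)} (hy : M.coact y = ∑ r ∈ S, r.1 ⊗ₜ[K] r.2) :
    M.mul y x = ∑ r ∈ S, M.mul (M.act r.1 x) r.2 := by
  simp [hM x y, braidMap_tmul_eq_sum _ _ x hy, XData.mulU]

theorem bp_mul_tmul (G : GData K A) (MX : XData K A X) (MY : XData K A Y) (a x : X)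
    (w u : Y) :
    (bp G MX MY).mul (a ⊗ₜ[K] w) (x ⊗ₜ[K] u) =
      map (MX.mul a) (MY.mul.flip u) (braidMap MY.coact MX.act (w ⊗ₜ[K] x)) := by
  obtain ⟨S, hw⟩ := TensorProduct.exists_finset (MY.coact w)
  simp [bp, braidMap_tmul_eq_sum _ _ x hw, hw]

theorem bp_act_tmul (G : GData K A) (MX : XData K A X) (MY : XData K A Y) (h : A) (v : X)
    (u : Y) :
    (bp G MX MY).act h (v ⊗ₜ[K] u) = map (MX.act.flip v) (MY.act.flip u) (G.comul h) := by
  simp only [bp, LinearMap.comp_apply]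
  induction G.comul h using TensorProduct.induction_on with
  | zero => simp
  | tmul a b => simp
  | add s t hs ht => simp [hs, ht]

theorem bp_coact_tmul (G : GData K A) (MX : XData K A X) (MY : XData K A Y) {x : X} {y : Y}
    {Sx : Finset (A × X)} {Sy : Finset (A × Y)} (hx : MX.coact x = ∑ p ∈ Sx, p.1 ⊗ₜ[K] p.2)
    (hy : MY.coact y = ∑ q ∈ Sy, q.1 ⊗ₜ[K] q.2) :
    (bp G MX MY).coact (x ⊗ₜ[K] y) =
      ∑ p ∈ Sx, ∑ q ∈ Sy, G.mul p.1 q.1 ⊗ₜ[K] (p.2 ⊗ₜ[K] q.2) := by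
  rw [Finset.sum_comm]
  simp [bp, hx, hy, TensorProduct.sum_tmul, TensorProduct.tmul_sum]

theorem IsYDMA.sum_assoc_comul_tmul {G : GData K A} {M : XData K A X} (hM : IsYDMA G M)
    {x : X} {S : Finset (A × X)} (hx : M.coact x = ∑ p ∈ S, p.1 ⊗ₜ[K] p.2)
    (R : A × X → Finset (A × X)) (hR : ∀ p ∈ S, M.coact p.2 = ∑ s ∈ R p, s.1 ⊗ₜ[K] s.2) :
    ∑ p ∈ S, TensorProduct.assoc K A A X (G.comul p.1 ⊗ₜ[K] p.2) =
      ∑ p ∈ S, ∑ s ∈ R p, p.1 ⊗ₜ[K] (s.1 ⊗ₜ[K] s.2) := by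
  have h := LinearMap.congr_fun hM.coassoc x
  simp only [LinearMap.comp_apply, LinearEquiv.coe_coe, hx, map_sum, rTensor_tmul,
    lTensor_tmul] at h
  rw [h]
  refine Finset.sum_congr rfl fun p hp => ?_
  rw [hR p hp, TensorProduct.tmul_sum]

end General

section Hopf

variable {Sinv : H →ₗ[K] H}

@[simp] theorem GData.ofHopf_mul (h g : H) : (GData.ofHopf K H).mul h g = h * g := rfl

@[simp] theorem GData.ofHopf_comul : (GData.ofHopf K H).comul = Coalgebra.comul := rfl

theorem IsYDMA.act_mul_apply {M : XData K H X} (hM : IsYDMA (GData.ofHopf K H) M)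
    (h g : H) (x : X) : M.act (h * g) x = M.act h (M.act g x) :=
  LinearMap.congr_fun (hM.act_mul h g) x

theorem IsYDMA.act_one_apply {M : XData K H X} (hM : IsYDMA (GData.ofHopf K H) M) (x : X) :
    M.act 1 x = x :=
  LinearMap.congr_fun hM.act_one x

theorem IsYDMA.sum_counit_smul {M : XData K H X} (hM : IsYDMA (GData.ofHopf K H) M) {z : X}
    {S : Finset (H × X)} (hz : M.coact z = ∑ s ∈ S, s.1 ⊗ₜ[K] s.2) :
    ∑ s ∈ S, Coalgebra.counit (R := K) s.1 • s.2 = z := by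
  simpa [hz, GData.ofHopf] using hM.counit_coact z

theorem sum_invAntipode_mul_eq_smul (hS : Sinv ∘ₗ HopfAlgebra.antipode K = LinearMap.id)
    (hS' : HopfAlgebra.antipode K ∘ₗ Sinv = LinearMap.id) {a : H} {ι : Type*}
    (r : Coalgebra.Repr K a ι) :
    ∑ i ∈ r.index, Sinv (r.right i) * r.left i = Coalgebra.counit (R := K) a • (1 : H) := by
  have hinj : Function.Injective (HopfAlgebra.antipode K (A := H)) :=
    Function.LeftInverse.injective (g := Sinv) (LinearMap.congr_fun hS)
  have hSSinv (h : H) : HopfAlgebra.antipode K (Sinv h) = h := LinearMap.congr_fun hS' h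
  apply hinj
  simp only [map_sum, map_smul, HopfAlgebra.antipode_one, HopfAlgebra.antipode_mul_antidistrib,
    hSSinv]
  exact HopfAlgebra.sum_antipode_mul_eq_smul r

theorem IsYDMA.sum_sum_invAntipode_mul_tmul
    (hS : Sinv ∘ₗ HopfAlgebra.antipode K = LinearMap.id)
    (hS' : HopfAlgebra.antipode K ∘ₗ Sinv = LinearMap.id)
    {M : XData K H X} (hM : IsYDMA (GData.ofHopf K H) M) {z : X} {S : Finset (H × X)}
    (hz : M.coact z = ∑ s ∈ S, s.1 ⊗ₜ[K] s.2) (R : H × X → Finset (H × X))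
    (hR : ∀ s ∈ S, M.coact s.2 = ∑ r ∈ R s, r.1 ⊗ₜ[K] r.2) :
    ∑ s ∈ S, ∑ r ∈ R s, (Sinv r.1 * s.1) ⊗ₜ[K] r.2 = (1 : H) ⊗ₜ[K] z := by
  let T : H ⊗[K] (H ⊗[K] X) →ₗ[K] H ⊗[K] X :=
    rTensor X (mul' K H ∘ₗ (TensorProduct.comm K H H).toLinearMap ∘ₗ lTensor H Sinv) ∘ₗ
      (TensorProduct.assoc K H H X).symm.toLinearMap
  have hT (c d : H) (x : X) : T (c ⊗ₜ[K] (d ⊗ₜ[K] x)) = (Sinv d * c) ⊗ₜ[K] x := by simp [T]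
  calc ∑ s ∈ S, ∑ r ∈ R s, (Sinv r.1 * s.1) ⊗ₜ[K] r.2
      = T (∑ s ∈ S, ∑ r ∈ R s, s.1 ⊗ₜ[K] (r.1 ⊗ₜ[K] r.2)) := by simp only [map_sum, hT]
    _ = T (∑ s ∈ S, TensorProduct.assoc K H H X (Coalgebra.comul s.1 ⊗ₜ[K] s.2)) :=
      congrArg T (hM.sum_assoc_comul_tmul hz R hR).symm
    _ = ∑ s ∈ S, (1 : H) ⊗ₜ[K] (Coalgebra.counit (R := K) s.1 • s.2) := by
      simp only [map_sum]
      refine Finset.sum_congr rfl fun s _ => ?_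
      rw [← (ℛ K s.1).eq, TensorProduct.sum_tmul, map_sum, map_sum]
      simp only [TensorProduct.assoc_tmul, hT, ← TensorProduct.sum_tmul,
        sum_invAntipode_mul_eq_smul hS hS', TensorProduct.smul_tmul]
    _ = (1 : H) ⊗ₜ[K] z := by rw [← TensorProduct.tmul_sum, hM.sum_counit_smul hz]

theorem bp_act_mul {MX : XData K H X} {MY : XData K H Y}
    (hX : IsYDMA (GData.ofHopf K H) MX) (hY : IsYDMA (GData.ofHopf K H) MY) (a b : H)
    (w : X ⊗[K] Y) :
    (bp (GData.ofHopf K H) MX MY).act (a * b) w =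
      (bp (GData.ofHopf K H) MX MY).act a ((bp (GData.ofHopf K H) MX MY).act b w) := by
  induction w using TensorProduct.induction_on with
  | zero => simp
  | add s t hs ht => simp [hs, ht]
  | tmul v u =>
    simp only [bp_act_tmul, GData.ofHopf_comul, ← ((ℛ K a).mul (ℛ K b)).eq, ← (ℛ K b).eq,
      map_sum, Coalgebra.Repr.mul_index, Coalgebra.Repr.mul_left, Coalgebra.Repr.mul_right,
      map_tmul, flip_apply, ← (ℛ K a).eq, hX.act_mul_apply, hY.act_mul_apply]
    rw [Finset.sum_product_right]

theorem bp_sum_tmul_act_mul_tmul (hS : Sinv ∘ₗ HopfAlgebra.antipode K = LinearMap.id)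
    (hS' : HopfAlgebra.antipode K ∘ₗ Sinv = LinearMap.id)
    {MX : XData K H X} {MY : XData K H Y}
    (hX : IsYDMA (GData.ofHopf K H) MX) (hY : IsYDMA (GData.ofHopf K H) MY)
    (hsym : BraidedSymm MX MY Sinv) (a : X) (u y : Y) {z : X} {S : Finset (H × X)}
    (hz : MX.coact z = ∑ s ∈ S, s.1 ⊗ₜ[K] s.2) :
    ∑ s ∈ S, (bp (GData.ofHopf K H) MX MY).mul (a ⊗ₜ[K] MY.act s.1 u) (s.2 ⊗ₜ[K] y) =
      MX.mul a z ⊗ₜ[K] MY.mul u y := by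
  classical
  choose R hR using fun s : H × X => TensorProduct.exists_finset (MX.coact s.2)
  let F : H ⊗[K] X →ₗ[K] X ⊗[K] Y :=
    (TensorProduct.comm K Y X).toLinearMap ∘ₗ map (MY.mul.flip y ∘ₗ MY.act.flip u) (MX.mul a)
  calc ∑ s ∈ S, (bp (GData.ofHopf K H) MX MY).mul (a ⊗ₜ[K] MY.act s.1 u) (s.2 ⊗ₜ[K] y)
      = ∑ s ∈ S, ∑ r ∈ R s, MX.mul a r.2 ⊗ₜ[K] MY.mul (MY.act (Sinv r.1 * s.1) u) y := by
        refine Finset.sum_congr rfl fun s _ => ?_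
        rw [bp_mul_tmul, hsym, braidInvMap_tmul_eq_sum _ _ _ _ (hR s)]
        simp [hY.act_mul_apply]
    _ = F (∑ s ∈ S, ∑ r ∈ R s, (Sinv r.1 * s.1) ⊗ₜ[K] r.2) := by simp [F]
    _ = MX.mul a z ⊗ₜ[K] MY.mul u y := by
        rw [hX.sum_sum_invAntipode_mul_tmul hS hS' hz R fun s _ => hR s]
        simp [F, hY.act_one_apply]

theorem bp_sum_act_mul_tmul (hS : Sinv ∘ₗ HopfAlgebra.antipode K = LinearMap.id)
    (hS' : HopfAlgebra.antipode K ∘ₗ Sinv = LinearMap.id)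
    {MX : XData K H X} {MY : XData K H Y}
    (hX : IsYDMA (GData.ofHopf K H) MX) (hY : IsYDMA (GData.ofHopf K H) MY)
    (hsym : BraidedSymm MX MY Sinv) (hXc : MX.IsBraidedComm) {x : X} {S : Finset (H × X)}
    (hx : MX.coact x = ∑ p ∈ S, p.1 ⊗ₜ[K] p.2) (y : Y) (w : X ⊗[K] Y) :
    ∑ p ∈ S, (bp (GData.ofHopf K H) MX MY).mul ((bp (GData.ofHopf K H) MX MY).act p.1 w)
        (p.2 ⊗ₜ[K] y) =
      map (MX.mul x) (MY.mul.flip y) w := by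
  induction w using TensorProduct.induction_on with
  | zero => simp
  | add s t hs ht => simp [← hs, ← ht, Finset.sum_add_distrib]
  | tmul v u =>
    classical
    choose R hR using fun p : H × X => TensorProduct.exists_finset (MX.coact p.2)
    let Ψ : H ⊗[K] (H ⊗[K] X) →ₗ[K] X ⊗[K] Y :=
      lift ((bp (GData.ofHopf K H) MX MY).mul.compl₂ ((TensorProduct.mk K X Y).flip y)) ∘ₗ
        rTensor X (map (MX.act.flip v) (MY.act.flip u)) ∘ₗ
        (TensorProduct.assoc K H H X).symm.toLinearMap
    have hΨ (c d : H) (z : X) : Ψ (c ⊗ₜ[K] (d ⊗ₜ[K] z)) =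
        (bp (GData.ofHopf K H) MX MY).mul (MX.act c v ⊗ₜ[K] MY.act d u) (z ⊗ₜ[K] y) := by
      simp [Ψ]
    calc ∑ p ∈ S, (bp (GData.ofHopf K H) MX MY).mul
            ((bp (GData.ofHopf K H) MX MY).act p.1 (v ⊗ₜ[K] u)) (p.2 ⊗ₜ[K] y)
        = Ψ (∑ p ∈ S, TensorProduct.assoc K H H X (Coalgebra.comul p.1 ⊗ₜ[K] p.2)) := by
          simp only [map_sum, bp_act_tmul, GData.ofHopf_comul]
          refine Finset.sum_congr rfl fun p _ => ?_
          simp [← (ℛ K p.1).eq, TensorProduct.sum_tmul, hΨ]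
      _ = Ψ (∑ p ∈ S, ∑ s ∈ R p, p.1 ⊗ₜ[K] (s.1 ⊗ₜ[K] s.2)) :=
          congrArg Ψ (hX.sum_assoc_comul_tmul hx R fun p _ => hR p)
      _ = ∑ p ∈ S, MX.mul (MX.act p.1 v) p.2 ⊗ₜ[K] MY.mul u y := by
          simp only [map_sum, hΨ]
          exact Finset.sum_congr rfl fun p _ =>
            bp_sum_tmul_act_mul_tmul hS hS' hX hY hsym _ u y (hR p)
      _ = map (MX.mul x) (MY.mul.flip y) (v ⊗ₜ[K] u) := by
          rw [← TensorProduct.sum_tmul, ← hXc.mul_eq_sum v hx]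
          rfl

theorem bp_mul_tmul_eq_sum_map_act {MX : XData K H X} {MY : XData K H Y}
    (hY : IsYDMA (GData.ofHopf K H) MY) (hYc : MY.IsBraidedComm) (x v : X) (u : Y) {y : Y}
    {S : Finset (H × Y)} (hy : MY.coact y = ∑ q ∈ S, q.1 ⊗ₜ[K] q.2) :
    (bp (GData.ofHopf K H) MX MY).mul (x ⊗ₜ[K] y) (v ⊗ₜ[K] u) =
      ∑ q ∈ S, map (MX.mul x) (MY.mul.flip q.2)
        ((bp (GData.ofHopf K H) MX MY).act q.1 (v ⊗ₜ[K] u)) := by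
  classical
  choose R hR using fun q : H × Y => TensorProduct.exists_finset (MY.coact q.2)
  let Ψ : H ⊗[K] (H ⊗[K] Y) →ₗ[K] X ⊗[K] Y :=
    map (MX.mul x ∘ₗ MX.act.flip v) (lift (MY.mul ∘ₗ MY.act.flip u))
  calc (bp (GData.ofHopf K H) MX MY).mul (x ⊗ₜ[K] y) (v ⊗ₜ[K] u)
      = ∑ q ∈ S, MX.mul x (MX.act q.1 v) ⊗ₜ[K] MY.mul q.2 u := by
        simp [bp_mul_tmul, braidMap_tmul_eq_sum _ _ v hy]
    _ = Ψ (∑ q ∈ S, ∑ s ∈ R q, q.1 ⊗ₜ[K] (s.1 ⊗ₜ[K] s.2)) := by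
        simp only [map_sum]
        refine Finset.sum_congr rfl fun q _ => ?_
        simp [Ψ, hYc.mul_eq_sum u (hR q), TensorProduct.tmul_sum]
    _ = Ψ (∑ q ∈ S, TensorProduct.assoc K H H Y (Coalgebra.comul q.1 ⊗ₜ[K] q.2)) :=
        congrArg Ψ (hY.sum_assoc_comul_tmul hy R fun q _ => hR q).symm
    _ = _ := by
        simp only [map_sum, bp_act_tmul, GData.ofHopf_comul]
        refine Finset.sum_congr rfl fun q _ => ?_
        simp [Ψ, ← (ℛ K q.1).eq, TensorProduct.sum_tmul]

end Hopf

/-- If `X` and `Y` are braided symmetric left–left Yetter–Drinfeld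
`H`-module algebras, each braided commutative, then the braided product `X ⋈ Y`
is braided commutative:
`((x ⋈ y)₍₋₁₎ ▷ (v ⋈ u)) (x ⋈ y)₍₀₎ = (x ⋈ y)(v ⋈ u)` for all `x, v ∈ X`, `y, u ∈ Y`. -/
theorem braided_product_braided_commutative
    (Sinv : H →ₗ[K] H)
    (hS : Sinv ∘ₗ HopfAlgebra.antipode (R := K) = LinearMap.id)
    (hS' : HopfAlgebra.antipode (R := K) ∘ₗ Sinv = LinearMap.id)
    (MX : XData K H X) (MY : XData K H Y)
    (hX : IsYDMA (GData.ofHopf K H) MX) (hY : IsYDMA (GData.ofHopf K H) MY)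
    (hsym : BraidedSymm MX MY Sinv)
    (hXc : MX.IsBraidedComm) (hYc : MY.IsBraidedComm) :
    ∀ (x v : X) (y u : Y),
      (bp (GData.ofHopf K H) MX MY).mulU
        (braidMap (bp (GData.ofHopf K H) MX MY).coact
          (bp (GData.ofHopf K H) MX MY).act
          ((x ⊗ₜ[K] y) ⊗ₜ[K] (v ⊗ₜ[K] u)))
      = (bp (GData.ofHopf K H) MX MY).mul (x ⊗ₜ[K] y) (v ⊗ₜ[K] u) := by
  intro x v y u
  obtain ⟨Sx, hx⟩ := TensorProduct.exists_finset (MX.coact x)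
  obtain ⟨Sy, hy⟩ := TensorProduct.exists_finset (MY.coact y)
  set B := bp (GData.ofHopf K H) MX MY
  calc B.mulU (braidMap B.coact B.act ((x ⊗ₜ[K] y) ⊗ₜ[K] (v ⊗ₜ[K] u)))
      = ∑ p ∈ Sx, ∑ q ∈ Sy, B.mul (B.act (p.1 * q.1) (v ⊗ₜ[K] u)) (p.2 ⊗ₜ[K] q.2) := by
        simp [B, braidMap, bp_coact_tmul _ _ _ hx hy, XData.mulU, TensorProduct.sum_tmul]
    _ = ∑ q ∈ Sy, ∑ p ∈ Sx, B.mul (B.act p.1 (B.act q.1 (v ⊗ₜ[K] u))) (p.2 ⊗ₜ[K] q.2) := by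
        rw [Finset.sum_comm]
        simp only [B, bp_act_mul hX hY]
    _ = ∑ q ∈ Sy, map (MX.mul x) (MY.mul.flip q.2) (B.act q.1 (v ⊗ₜ[K] u)) :=
        Finset.sum_congr rfl fun q _ =>
          bp_sum_act_mul_tmul hS hS' hX hY hsym hXc hx q.2 _
    _ = B.mul (x ⊗ₜ[K] y) (v ⊗ₜ[K] u) := (bp_mul_tmul_eq_sum_map_act hY hYc x v u hy).symm
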